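/- Let F be uniformly elliptic with constants 0 < λ ≤ Λ (i.e. M⁻(N) ≤ F(M+N) − F(M) ≤ M⁺(N) for all symmetric M, N) and F(0) = 0. Let M be a symmetric n×n matrix and ν a unit vector with F(M) = 0. If M̃ is a symmetric matrix with ‖M̃ − M‖ ≤ ε, then there exists t ∈ ℝ with |t| ≤ (nΛ/λ)·ε such that F(M̃ + t·(ν⊥ ⊗ ν⊥)) = 0, where ν⊥ is any unit vector orthogonal to ν. -/

import Mathlib

open scoped Matrix.Norms.L2Operator RealInnerProductSpace

/-!
With `P = ν⊥ ⊗ ν⊥`, positive semidefinite of trace one, ellipticity makes `g t = F (M̃ + t P)`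
increase with slope between `λ` and `Λ`. Every eigenvalue of `M̃ - M` is bounded by `‖M̃ - M‖`,
so the Pucci bounds give `|g 0| = |F M̃ - F M| ≤ n Λ ε`. Hence `g` changes sign on `[-T, T]` with
`λ T = n Λ ε`, and the intermediate value theorem gives the zero.
-/

/-- The Pucci minimal operator `M⁻_{λ,Λ}(N)`. -/
noncomputable def pucciMinus {n : ℕ} (lam Lam : ℝ) (N : Matrix (Fin n) (Fin n) ℝ)
    (hN : N.IsHermitian) : ℝ :=
  Lam * ∑ i ∈ Finset.univ.filter (fun i => hN.eigenvalues i < 0), hN.eigenvalues i +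
    lam * ∑ i ∈ Finset.univ.filter (fun i => 0 < hN.eigenvalues i), hN.eigenvalues i

/-- The Pucci maximal operator `M⁺_{λ,Λ}(N)`. -/
noncomputable def pucciPlus {n : ℕ} (lam Lam : ℝ) (N : Matrix (Fin n) (Fin n) ℝ)
    (hN : N.IsHermitian) : ℝ :=
  lam * ∑ i ∈ Finset.univ.filter (fun i => hN.eigenvalues i < 0), hN.eigenvalues i +
    Lam * ∑ i ∈ Finset.univ.filter (fun i => 0 < hN.eigenvalues i), hN.eigenvalues i

section Pucci

variable {n : ℕ} {N : Matrix (Fin n) (Fin n) ℝ}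

lemma Matrix.IsHermitian.abs_eigenvalues_le (hN : N.IsHermitian) (i : Fin n) :
    |hN.eigenvalues i| ≤ ‖N‖ :=
  have : Nonempty (Fin n) := ⟨i⟩
  spectrum.norm_le_norm_of_mem (hN.eigenvalues_mem_spectrum_real i)

lemma Matrix.IsHermitian.abs_sum_eigenvalues_le (hN : N.IsHermitian) (s : Finset (Fin n)) :
    |∑ i ∈ s, hN.eigenvalues i| ≤ n * ‖N‖ :=
  calc |∑ i ∈ s, hN.eigenvalues i|
      ≤ ∑ i ∈ s, |hN.eigenvalues i| := Finset.abs_sum_le_sum_abs _ _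
    _ ≤ ∑ _i ∈ s, ‖N‖ := Finset.sum_le_sum fun i _ => hN.abs_eigenvalues_le i
    _ = s.card * ‖N‖ := by rw [Finset.sum_const, nsmul_eq_mul]
    _ ≤ n * ‖N‖ := by
      gcongr
      simpa using Finset.card_le_univ s

lemma Matrix.PosSemidef.sum_neg_eigenvalues_eq_zero (hN : N.PosSemidef) :
    ∑ i ∈ Finset.univ.filter (fun i => hN.1.eigenvalues i < 0), hN.1.eigenvalues i = 0 := by
  rw [Finset.filter_false_of_mem fun i _ => not_lt.mpr (hN.eigenvalues_nonneg i),
    Finset.sum_empty]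

lemma Matrix.PosSemidef.sum_pos_eigenvalues_eq_trace (hN : N.PosSemidef) :
    ∑ i ∈ Finset.univ.filter (fun i => 0 < hN.1.eigenvalues i), hN.1.eigenvalues i = N.trace := by
  rw [Finset.sum_filter_of_ne fun i _ hi => (hN.eigenvalues_nonneg i).lt_of_ne' hi,
    hN.1.trace_eq_sum_eigenvalues]
  rfl

variable (lam Lam : ℝ)

lemma pucciMinus_of_posSemidef (hN : N.PosSemidef) : pucciMinus lam Lam N hN.1 = lam * N.trace := by
  rw [pucciMinus, hN.sum_neg_eigenvalues_eq_zero, hN.sum_pos_eigenvalues_eq_trace, mul_zero,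
    zero_add]

lemma pucciPlus_of_posSemidef (hN : N.PosSemidef) : pucciPlus lam Lam N hN.1 = Lam * N.trace := by
  rw [pucciPlus, hN.sum_neg_eigenvalues_eq_zero, hN.sum_pos_eigenvalues_eq_trace, mul_zero,
    zero_add]

variable {lam Lam}

lemma neg_le_pucciMinus (hlam : 0 ≤ lam) (hLam : 0 ≤ Lam) (hN : N.IsHermitian) :
    -(n * Lam * ‖N‖) ≤ pucciMinus lam Lam N hN := by
  have hneg := (abs_le.mp (hN.abs_sum_eigenvalues_le
    (Finset.univ.filter (fun i => hN.eigenvalues i < 0)))).1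
  have hpos : 0 ≤ ∑ i ∈ Finset.univ.filter (fun i => 0 < hN.eigenvalues i), hN.eigenvalues i :=
    Finset.sum_nonneg fun i hi => (Finset.mem_filter.mp hi).2.le
  rw [pucciMinus]
  nlinarith [mul_le_mul_of_nonneg_left hneg hLam, mul_nonneg hlam hpos]

lemma pucciPlus_le (hlam : 0 ≤ lam) (hLam : 0 ≤ Lam) (hN : N.IsHermitian) :
    pucciPlus lam Lam N hN ≤ n * Lam * ‖N‖ := by
  have hpos := (abs_le.mp (hN.abs_sum_eigenvalues_le
    (Finset.univ.filter (fun i => 0 < hN.eigenvalues i)))).2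
  have hneg : ∑ i ∈ Finset.univ.filter (fun i => hN.eigenvalues i < 0), hN.eigenvalues i ≤ 0 :=
    Finset.sum_nonpos fun i hi => (Finset.mem_filter.mp hi).2.le
  rw [pucciPlus]
  nlinarith [mul_le_mul_of_nonneg_left hpos hLam, mul_nonpos_of_nonneg_of_nonpos hlam hneg]

end Pucci

def IsUniformlyElliptic {n : ℕ} (lam Lam : ℝ) (F : Matrix (Fin n) (Fin n) ℝ → ℝ) : Prop :=
  ∀ (M N : Matrix (Fin n) (Fin n) ℝ), M.IsHermitian → ∀ (hN : N.IsHermitian),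
    pucciMinus lam Lam N hN ≤ F (M + N) - F M ∧ F (M + N) - F M ≤ pucciPlus lam Lam N hN

namespace IsUniformlyElliptic

variable {n : ℕ} {lam Lam : ℝ} {F : Matrix (Fin n) (Fin n) ℝ → ℝ}

lemma abs_sub_le (hF : IsUniformlyElliptic lam Lam F) (hlam : 0 ≤ lam) (hLam : 0 ≤ Lam)
    {M N : Matrix (Fin n) (Fin n) ℝ} (hM : M.IsHermitian) (hN : N.IsHermitian) :
    |F (M + N) - F M| ≤ n * Lam * ‖N‖ :=
  abs_le.mpr ⟨(neg_le_pucciMinus hlam hLam hN).trans (hF M N hM hN).1,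
    (hF M N hM hN).2.trans (pucciPlus_le hlam hLam hN)⟩

lemma sub_mem_Icc_of_posSemidef (hF : IsUniformlyElliptic lam Lam F)
    {A P : Matrix (Fin n) (Fin n) ℝ} (hA : A.IsHermitian) (hP : P.PosSemidef) {s t : ℝ}
    (hst : s ≤ t) :
    F (A + t • P) - F (A + s • P) ∈
      Set.Icc (lam * ((t - s) * P.trace)) (Lam * ((t - s) * P.trace)) := by
  have hstP : ((t - s) • P).PosSemidef := hP.smul (sub_nonneg.mpr hst)
  have h := hF (A + s • P) ((t - s) • P) (hA.add (hP.1.smul (IsSelfAdjoint.all s))) hstP.1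
  rwa [pucciMinus_of_posSemidef lam Lam hstP, pucciPlus_of_posSemidef lam Lam hstP,
    Matrix.trace_smul, smul_eq_mul, add_assoc, ← add_smul, add_sub_cancel] at h

end IsUniformlyElliptic

lemma continuous_of_monotone_sub_le_mul {g : ℝ → ℝ} {L : ℝ}
    (h : ∀ s t, s ≤ t → 0 ≤ g t - g s ∧ g t - g s ≤ L * (t - s)) : Continuous g := by
  refine (LipschitzWith.of_le_add_mul' L fun s t => ?_).continuous
  rcases le_total s t with hst | hts
  · rw [Real.dist_eq, abs_of_nonpos (sub_nonpos.mpr hst)]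
    linarith [h s t hst]
  · rw [Real.dist_eq, abs_of_nonneg (sub_nonneg.mpr hts)]
    linarith [h t s hts]

lemma exists_abs_le_zero_of_slope_ge {g : ℝ → ℝ} (hg : Continuous g) {c T : ℝ}
    (hslope : ∀ s t, s ≤ t → c * (t - s) ≤ g t - g s) (hT : 0 ≤ T) (h0 : |g 0| ≤ c * T) :
    ∃ t, |t| ≤ T ∧ g t = 0 := by
  have hgT : 0 ≤ g T := by
    linarith [hslope 0 T hT, (abs_le.mp h0).1]
  have hgmT : g (-T) ≤ 0 := by
    linarith [hslope (-T) 0 (neg_nonpos.mpr hT), (abs_le.mp h0).2]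
  obtain ⟨t, ht, hgt⟩ := intermediate_value_Icc (neg_le_self hT) hg.continuousOn ⟨hgmT, hgT⟩
  exact ⟨t, abs_le.mpr ht, hgt⟩

theorem zero_of_F_rank_one_correction_general {n : ℕ} (lam Lam : ℝ) (hlam : 0 < lam)
    (hle : lam ≤ Lam) (F : Matrix (Fin n) (Fin n) ℝ → ℝ)
    (hellip : ∀ (M N : Matrix (Fin n) (Fin n) ℝ), M.IsHermitian → ∀ (hN : N.IsHermitian),
      pucciMinus lam Lam N hN ≤ F (M + N) - F M ∧ F (M + N) - F M ≤ pucciPlus lam Lam N hN)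
    (M Mt : Matrix (Fin n) (Fin n) ℝ) (hM : M.IsHermitian) (hMt : Mt.IsHermitian)
    (νperp : EuclideanSpace ℝ (Fin n)) (hνperp : ‖νperp‖ = 1)
    (hFM : F M = 0) (ε : ℝ) (hclose : ‖Mt - M‖ ≤ ε) :
    ∃ t : ℝ, |t| ≤ ((n : ℝ) * Lam / lam) * ε ∧
      F (Mt + t • Matrix.of (fun i j => νperp i * νperp j)) = 0 := by
  have hF : IsUniformlyElliptic lam Lam F := hellip
  set P : Matrix (Fin n) (Fin n) ℝ := Matrix.of (fun i j => νperp i * νperp j)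
  have hP : P.PosSemidef := Matrix.posSemidef_vecMulVec_self_star νperp.ofLp
  have htrace : P.trace = 1 := by
    rw [show P = Matrix.vecMulVec νperp.ofLp νperp.ofLp from rfl, Matrix.trace_vecMulVec]
    simpa [hνperp] using (EuclideanSpace.inner_eq_star_dotProduct νperp νperp).symm
  have hLam : 0 ≤ Lam := hlam.le.trans hle
  have hslope (s t : ℝ) (hst : s ≤ t) :
      lam * (t - s) ≤ F (Mt + t • P) - F (Mt + s • P) ∧
        F (Mt + t • P) - F (Mt + s • P) ≤ Lam * (t - s) := by
    simpa [htrace] using hF.sub_mem_Icc_of_posSemidef hMt hP hst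
  have hcont : Continuous fun t => F (Mt + t • P) :=
    continuous_of_monotone_sub_le_mul fun s t hst =>
      ⟨by nlinarith [(hslope s t hst).1], (hslope s t hst).2⟩
  have hFMt : |F Mt| ≤ lam * ((n * Lam / lam) * ε) := by
    have h := hF.abs_sub_le hlam.le hLam hM (hMt.sub hM)
    rw [add_sub_cancel, hFM, sub_zero] at h
    calc |F Mt| ≤ n * Lam * ‖Mt - M‖ := h
      _ ≤ n * Lam * ε := by gcongr
      _ = lam * ((n * Lam / lam) * ε) := by field_simp
  exact exists_abs_le_zero_of_slope_ge hcont (fun s t hst => (hslope s t hst).1)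
    (by have := (norm_nonneg _).trans hclose; positivity) (by simpa using hFMt)

/-- Correcting a matrix `M̃` close to a zero of `F` in the rank-one direction `ν⊥ ⊗ ν⊥`. -/
theorem zero_of_F_rank_one_correction {n : ℕ} (lam Lam : ℝ) (hlam : 0 < lam)
    (hle : lam ≤ Lam) (F : Matrix (Fin n) (Fin n) ℝ → ℝ)
    (hellip : ∀ (M N : Matrix (Fin n) (Fin n) ℝ), M.IsHermitian → ∀ (hN : N.IsHermitian),
      pucciMinus lam Lam N hN ≤ F (M + N) - F M ∧ F (M + N) - F M ≤ pucciPlus lam Lam N hN)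
    (hF0 : F 0 = 0)
    (M Mt : Matrix (Fin n) (Fin n) ℝ) (hM : M.IsHermitian) (hMt : Mt.IsHermitian)
    (ν νperp : EuclideanSpace ℝ (Fin n)) (hν : ‖ν‖ = 1) (hνperp : ‖νperp‖ = 1)
    (horth : ⟪ν, νperp⟫ = 0)
    (hFM : F M = 0) (ε : ℝ) (hε : 0 ≤ ε) (hclose : ‖Mt - M‖ ≤ ε) :
    ∃ t : ℝ, |t| ≤ ((n : ℝ) * Lam / lam) * ε ∧
      F (Mt + t • Matrix.of (fun i j => νperp i * νperp j)) = 0 :=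
  zero_of_F_rank_one_correction_general lam Lam hlam hle F hellip M Mt hM hMt νperp hνperp hFM ε
    hclose
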